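/- Let A ⊆ ℝ, f : A → ℝ, a, L ∈ ℝ. Then L is the T₆ limit of f at a if and only if there exist functions g, h : A → ℝ and δ₀ > 0 such that f(x) = g(x) + h(x) for all x ∈ A, g has classical limit L at a, and the set {x ∈ ((a−δ₀, a+δ₀) \ {a}) ∩ A : h(x) ≠ 0} has Lebesgue measure zero. -/

import Mathlib

/-! Choosing `δₙ` for `ε = 1/(n+1)`, the union `N` of the exceptional sets is null. Replacing `f`
by the constant `L` on `N` gives `g`, which has classical limit `L`, and the correction
`h = 𝟙_N · (f - L)` vanishes off the null set `N`. Conversely, near `a` the exceptional set of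
`f = g + h` lies in that of `g`, which is eventually empty, together with the null set `{h ≠ 0}`. -/

open Set

/-- Exceptional set for the limit of `f` restricted to `A` at `a` with value `L`. -/
def excepSet (A : Set ℝ) (f : ℝ → ℝ) (a L δ ε : ℝ) : Set ℝ :=
  {x | x ∈ Set.Ioo (a - δ) (a + δ) ∧ x ≠ a ∧ x ∈ A ∧ ε ≤ |f x - L|}

open MeasureTheory

def nonzeroSet (A : Set ℝ) (h : ℝ → ℝ) (a δ : ℝ) : Set ℝ :=
  {x | x ∈ Ioo (a - δ) (a + δ) ∧ x ≠ a ∧ x ∈ A ∧ h x ≠ 0}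

section

variable {A : Set ℝ} {f g h : ℝ → ℝ} {a L δ δ' ε ε' : ℝ}

theorem excepSet_mono (hδ : δ ≤ δ') (hε : ε' ≤ ε) :
    excepSet A f a L δ ε ⊆ excepSet A f a L δ' ε' := by
  rintro x ⟨⟨hlo, hhi⟩, hxa, hxA, hfx⟩
  exact ⟨⟨by linarith, by linarith⟩, hxa, hxA, hε.trans hfx⟩

theorem nonzeroSet_mono (hδ : δ ≤ δ') : nonzeroSet A h a δ ⊆ nonzeroSet A h a δ' := by
  rintro x ⟨⟨hlo, hhi⟩, hxa, hxA, hhx⟩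
  exact ⟨⟨by linarith, by linarith⟩, hxa, hxA, hhx⟩

theorem excepSet_add_subset (hfgh : ∀ x ∈ A, f x = g x + h x) :
    excepSet A f a L δ ε ⊆ excepSet A g a L δ ε ∪ nonzeroSet A h a δ := by
  rintro x ⟨hxI, hxa, hxA, hfx⟩
  by_cases hhx : h x = 0
  · rw [hfgh x hxA, hhx, add_zero] at hfx
    exact Or.inl ⟨hxI, hxa, hxA, hfx⟩
  · exact Or.inr ⟨hxI, hxa, hxA, hhx⟩

theorem excepSet_piecewise_const_eq_empty {N : Set ℝ} [DecidablePred (· ∈ N)] (hε : 0 < ε)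
    (hN : excepSet A f a L δ ε ⊆ N) :
    excepSet A (N.piecewise (fun _ => L) f) a L δ ε = ∅ := by
  refine eq_empty_of_forall_notMem fun x ⟨hxI, hxa, hxA, hgx⟩ => ?_
  by_cases hxN : x ∈ N
  · rw [piecewise_eq_of_mem _ _ _ hxN, sub_self, abs_zero] at hgx
    exact hε.not_ge hgx
  · rw [piecewise_eq_of_notMem _ _ _ hxN] at hgx
    exact hxN (hN ⟨hxI, hxa, hxA, hgx⟩)

theorem nonzeroSet_indicator_subset (N : Set ℝ) :
    nonzeroSet A (N.indicator fun x => f x - L) a δ ⊆ N :=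
  fun _ ⟨_, _, _, hx⟩ => mem_of_indicator_ne_zero hx

end

theorem stmt_19 (A : Set ℝ) (f : ℝ → ℝ) (a L : ℝ) :
    (∀ ε > 0, ∃ δ > 0, MeasureTheory.volume (excepSet A f a L δ ε) = 0) ↔
    (∃ (g h : ℝ → ℝ) (δ₀ : ℝ), 0 < δ₀ ∧ (∀ x ∈ A, f x = g x + h x) ∧
      (∀ ε > 0, ∃ δ > 0, excepSet A g a L δ ε = ∅) ∧
      MeasureTheory.volume {x | x ∈ Set.Ioo (a - δ₀) (a + δ₀) ∧ x ≠ a ∧ x ∈ A ∧ h x ≠ 0} = 0) := by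
  classical
  constructor
  · intro hT₆
    choose δ hδ hδnull using fun n : ℕ => hT₆ (1 / (n + 1)) Nat.one_div_pos_of_nat
    set N := ⋃ n : ℕ, excepSet A f a L (δ n) (1 / (n + 1))
    have hNnull : volume N = 0 := measure_iUnion_null hδnull
    refine ⟨N.piecewise (fun _ => L) f, N.indicator fun x => f x - L, 1, one_pos,
      fun x _ => ?_, fun ε hε => ?_, measure_mono_null (nonzeroSet_indicator_subset N) hNnull⟩
    · by_cases hxN : x ∈ N <;> simp [hxN]
    · obtain ⟨n, hn⟩ := exists_nat_one_div_lt hε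
      exact ⟨δ n, hδ n, excepSet_piecewise_const_eq_empty hε
        ((excepSet_mono le_rfl hn.le).trans (subset_iUnion_of_subset n subset_rfl))⟩
  · rintro ⟨g, h, δ₀, hδ₀, hfgh, hg, hh⟩ ε hε
    obtain ⟨δ, hδ, hgε⟩ := hg ε hε
    refine ⟨min δ δ₀, lt_min hδ hδ₀, measure_mono_null (excepSet_add_subset hfgh) ?_⟩
    rw [measure_union_null_iff]
    exact ⟨measure_mono_null (excepSet_mono (min_le_left δ δ₀) le_rfl) (by rw [hgε, measure_empty]),
      measure_mono_null (nonzeroSet_mono (min_le_right δ δ₀)) hh⟩
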